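/- Let J be a pseudo-Hermitian almost complex structure on V and let c₀, c₁ ∈ ℝ. Then R := c₀R_Id + c₁R_J is an almost complex Jordan IP algebraic curvature tensor, where R_Id is the tensor associated to the self-adjoint map Id and R_J is the tensor associated to the skew-adjoint map J. -/

import Mathlib

/-!
Write `ε = (x, x) = ±1`. The curvature operator `R(x, Jx)` acts as `-ε (c₀ + 3 c₁) J` on the
complex line `span {x, Jx}` and as `-2 ε c₁ J` on its orthogonal complement, which is again a
nondegenerate `J`-invariant subspace. Splitting off nonisotropic complex lines one at a time gives a
basis `x, Jx, e₁, Je₁, …` in which `R(x, Jx)` is block diagonal with `2 × 2` rotation blocks whose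
weights depend only on `ε`, and whose number is fixed by `dim V`. The block forms for `ε` and `-ε`
are conjugate by the map fixing each `eᵢ` and negating each `Jeᵢ`.
-/

open Module

variable {V : Type*} [AddCommGroup V] [Module ℝ V] [FiniteDimensional ℝ V]

/-- `R` is an algebraic curvature tensor: multilinear in each slot and satisfying the
usual curvature symmetries. -/
def IsAlgCurvTensor (R : V → V → V → V → ℝ) : Prop :=
  (∀ (a : ℝ) (x x' y z w : V), R (a • x + x') y z w = a * R x y z w + R x' y z w) ∧
  (∀ (a : ℝ) (x y y' z w : V), R x (a • y + y') z w = a * R x y z w + R x y' z w) ∧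
  (∀ (a : ℝ) (x y z z' w : V), R x y (a • z + z') w = a * R x y z w + R x y z' w) ∧
  (∀ (a : ℝ) (x y z w w' : V), R x y z (a • w + w') = a * R x y z w + R x y z w') ∧
  (∀ x y z w : V, R x y z w = - R y x z w) ∧
  (∀ x y z w : V, R x y z w = R z w x y) ∧
  (∀ x y z w : V, R x y z w + R y z x w + R z x y w = 0)

/-- `J` is a pseudo-Hermitian almost complex structure on `(V, B)`. -/
def IsPseudoHermitian (B : LinearMap.BilinForm ℝ V) (J : V →ₗ[ℝ] V) : Prop :=
  (∀ x : V, J (J x) = -x) ∧ (∀ x y : V, B (J x) (J y) = B x y)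

/-- `π` is a nondegenerate complex line: a `2`-dimensional `J`-invariant subspace
on which `B` is nondegenerate. -/
def IsNondegComplexLine (B : LinearMap.BilinForm ℝ V) (J : V →ₗ[ℝ] V)
    (π : Submodule ℝ V) : Prop :=
  finrank ℝ π = 2 ∧ (∀ v ∈ π, J v ∈ π) ∧
  (∀ v ∈ π, (∀ w ∈ π, B v w = 0) → v = 0)

/-- `R` is almost complex: for every `x` such that `span {x, Jx}` is a nondegenerate
complex line, the curvature operator `R(x, Jx)` (defined by
`B (A z) w = R x (Jx) z w`) commutes with `J`. -/
def IsAlmostComplex (B : LinearMap.BilinForm ℝ V) (J : V →ₗ[ℝ] V)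
    (R : V → V → V → V → ℝ) : Prop :=
  ∀ x : V, IsNondegComplexLine B J (Submodule.span ℝ {x, J x}) →
    ∀ A : V →ₗ[ℝ] V, (∀ z w : V, B (A z) w = R x (J x) z w) →
      ∀ v : V, J (A v) = A (J v)

/-- `φ` is self-adjoint with respect to `B`. -/
def IsSelfAdj (B : LinearMap.BilinForm ℝ V) (φ : V →ₗ[ℝ] V) : Prop :=
  ∀ x y : V, B (φ x) y = B x (φ y)

/-- `φ` is skew-adjoint with respect to `B`. -/
def IsSkewAdj (B : LinearMap.BilinForm ℝ V) (φ : V →ₗ[ℝ] V) : Prop :=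
  ∀ x y : V, B (φ x) y = - B x (φ y)

/-- The curvature tensor `R_φ` associated to a self-adjoint map `φ`. -/
def Rs (B : LinearMap.BilinForm ℝ V) (φ : V →ₗ[ℝ] V) : V → V → V → V → ℝ :=
  fun x y z w => B (φ y) z * B (φ x) w - B (φ x) z * B (φ y) w

/-- The curvature tensor `R_φ` associated to a skew-adjoint map `φ`. -/
def Ra (B : LinearMap.BilinForm ℝ V) (φ : V →ₗ[ℝ] V) : V → V → V → V → ℝ :=
  fun x y z w =>
    B (φ y) z * B (φ x) w - B (φ x) z * B (φ y) w - 2 * B (φ x) y * B (φ z) w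

/-- `R` is almost complex Jordan IP: the Jordan normal form of the skew-symmetric
curvature operator is constant on the nondegenerate complex lines, i.e. for all
`x, y` with `|B x x| = 1` and `|B y y| = 1` the operators `R(x, Jx)` and `R(y, Jy)`
are conjugate by an invertible linear map. -/
def IsComplexJordanIP (B : LinearMap.BilinForm ℝ V) (J : V →ₗ[ℝ] V)
    (R : V → V → V → V → ℝ) : Prop :=
  ∀ x y : V, |B x x| = 1 → |B y y| = 1 →
    ∀ Ax Ay : V →ₗ[ℝ] V,
      (∀ z w : V, B (Ax z) w = R x (J x) z w) →
      (∀ z w : V, B (Ay z) w = R y (J y) z w) →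
      ∃ ψ : V ≃ₗ[ℝ] V, ∀ v : V, Ax v = ψ (Ay (ψ.symm v))


section

variable {E : Type*} [AddCommGroup E] [Module ℝ E] {B : LinearMap.BilinForm ℝ E}
  {J φ : E →ₗ[ℝ] E}

theorem IsAlgCurvTensor.linearCombination {R S : E → E → E → E → ℝ} (hR : IsAlgCurvTensor R)
    (hS : IsAlgCurvTensor S) (a b : ℝ) :
    IsAlgCurvTensor fun x y z w => a * R x y z w + b * S x y z w := by
  obtain ⟨hR₁, hR₂, hR₃, hR₄, hR₅, hR₆, hR₇⟩ := hR
  obtain ⟨hS₁, hS₂, hS₃, hS₄, hS₅, hS₆, hS₇⟩ := hS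
  refine ⟨fun c x x' y z w => ?_, fun c x y y' z w => ?_, fun c x y z z' w => ?_,
    fun c x y z w w' => ?_, fun x y z w => ?_, fun x y z w => ?_, fun x y z w => ?_⟩ <;>
    dsimp only
  · rw [hR₁, hS₁]; ring
  · rw [hR₂, hS₂]; ring
  · rw [hR₃, hS₃]; ring
  · rw [hR₄, hS₄]; ring
  · rw [hR₅, hS₅]; ring
  · rw [hR₆, hS₆]
  · linear_combination a * hR₇ x y z w + b * hS₇ x y z w

theorem isAlgCurvTensor_Rs (hB : ∀ x y, B x y = B y x) (hφ : IsSelfAdj B φ) :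
    IsAlgCurvTensor (Rs B φ) := by
  have swap (u v : E) : B (φ u) v = B (φ v) u := by rw [hφ, hB]
  refine ⟨fun c x x' y z w => ?_, fun c x y y' z w => ?_, fun c x y z z' w => ?_,
    fun c x y z w w' => ?_, fun x y z w => ?_, fun x y z w => ?_, fun x y z w => ?_⟩ <;>
    simp only [Rs, map_add, map_smul, LinearMap.add_apply, LinearMap.smul_apply, smul_eq_mul]
  iterate 5 ring
  · rw [swap w x, swap z y, swap z x, swap w y]; ring
  · rw [swap z x, swap y x, swap z y]; ring

theorem isAlgCurvTensor_Ra (hB : ∀ x y, B x y = B y x) (hφ : IsSkewAdj B φ) :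
    IsAlgCurvTensor (Ra B φ) := by
  have swap (u v : E) : B (φ u) v = -B (φ v) u := by rw [hφ, hB]
  refine ⟨fun c x x' y z w => ?_, fun c x y y' z w => ?_, fun c x y z z' w => ?_,
    fun c x y z w w' => ?_, fun x y z w => ?_, fun x y z w => ?_, fun x y z w => ?_⟩ <;>
    simp only [Ra, map_add, map_smul, LinearMap.add_apply, LinearMap.smul_apply, smul_eq_mul]
  iterate 4 ring
  · rw [swap y x]; ring
  · rw [swap w x, swap z y, swap z x, swap w y, swap z w]; ring
  · rw [swap z x, swap y x, swap z y]; ring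

theorem isSelfAdj_id : IsSelfAdj B LinearMap.id := fun _ _ => rfl

theorem IsPseudoHermitian.isSkewAdj (hJ : IsPseudoHermitian B J) : IsSkewAdj B J := by
  intro u v
  have := hJ.2 u (J v)
  rw [hJ.1 v, map_neg] at this
  linarith

theorem IsPseudoHermitian.apply_J_self (hB : ∀ x y, B x y = B y x) (hJ : IsPseudoHermitian B J)
    (x : E) : B (J x) x = 0 := by
  have := hJ.isSkewAdj x x
  rw [hB x] at this
  linarith

def idJTensor (B : LinearMap.BilinForm ℝ E) (J : E →ₗ[ℝ] E) (c₀ c₁ : ℝ) :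
    E → E → E → E → ℝ :=
  fun x y z w => c₀ * Rs B LinearMap.id x y z w + c₁ * Ra B J x y z w

def IsCurvatureOperator (B : LinearMap.BilinForm ℝ E) (R : E → E → E → E → ℝ) (x y : E)
    (A : E →ₗ[ℝ] E) : Prop :=
  ∀ z w, B (A z) w = R x y z w

theorem isAlgCurvTensor_idJTensor (hB : ∀ x y, B x y = B y x) (hJ : IsPseudoHermitian B J)
    (c₀ c₁ : ℝ) : IsAlgCurvTensor (idJTensor B J c₀ c₁) :=
  (isAlgCurvTensor_Rs hB isSelfAdj_id).linearCombination
    (isAlgCurvTensor_Ra hB hJ.isSkewAdj) c₀ c₁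

section CurvatureOperator

variable {c₀ c₁ : ℝ} {x : E} {A : E →ₗ[ℝ] E}

theorem IsCurvatureOperator.idJTensor_apply (hnd : ∀ v : E, (∀ w : E, B v w = 0) → v = 0)
    (hJ : IsPseudoHermitian B J) (hA : IsCurvatureOperator B (idJTensor B J c₀ c₁) x (J x) A)
    (v : E) :
    A v = ((c₀ + c₁) * B (J x) v) • x - ((c₀ + c₁) * B x v) • J x - (2 * c₁ * B x x) • J v := by
  rw [← sub_eq_zero]
  refine hnd _ fun w => ?_
  rw [map_sub, LinearMap.sub_apply, hA]
  simp only [idJTensor, Rs, Ra, LinearMap.id_coe, id_eq, hJ.1 x, hJ.2 x x, map_neg, map_sub,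
    map_smul, LinearMap.neg_apply, LinearMap.sub_apply, LinearMap.smul_apply, smul_eq_mul]
  ring

theorem IsCurvatureOperator.idJTensor_comm (hnd : ∀ v : E, (∀ w : E, B v w = 0) → v = 0)
    (hJ : IsPseudoHermitian B J) (hA : IsCurvatureOperator B (idJTensor B J c₀ c₁) x (J x) A)
    (v : E) : J (A v) = A (J v) := by
  have hskew : B x (J v) = -B (J x) v := by rw [hJ.isSkewAdj]; ring
  rw [hA.idJTensor_apply hnd hJ, hA.idJTensor_apply hnd hJ, hJ.2, hskew]
  simp only [map_sub, map_smul, hJ.1]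
  module

theorem isAlmostComplex_idJTensor (hnd : ∀ v : E, (∀ w : E, B v w = 0) → v = 0)
    (hJ : IsPseudoHermitian B J) (c₀ c₁ : ℝ) : IsAlmostComplex B J (idJTensor B J c₀ c₁) :=
  fun _ _ _ hA => IsCurvatureOperator.idJTensor_comm hnd hJ hA

theorem IsCurvatureOperator.idJTensor_apply_self (hB : ∀ x y, B x y = B y x)
    (hnd : ∀ v : E, (∀ w : E, B v w = 0) → v = 0) (hJ : IsPseudoHermitian B J)
    (hA : IsCurvatureOperator B (idJTensor B J c₀ c₁) x (J x) A) :
    A x = -(B x x * (c₀ + 3 * c₁)) • J x := by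
  rw [hA.idJTensor_apply hnd hJ, hJ.apply_J_self hB]
  module

theorem IsCurvatureOperator.idJTensor_apply_of_orthogonal
    (hnd : ∀ v : E, (∀ w : E, B v w = 0) → v = 0) (hJ : IsPseudoHermitian B J)
    (hA : IsCurvatureOperator B (idJTensor B J c₀ c₁) x (J x) A) {v : E} (hxv : B x v = 0)
    (hJxv : B (J x) v = 0) :
    A v = -(B x x * (2 * c₁)) • J v := by
  rw [hA.idJTensor_apply hnd hJ, hxv, hJxv]
  module

end CurvatureOperator

def IsNondegComplexSubspace (B : LinearMap.BilinForm ℝ E) (J : E →ₗ[ℝ] E)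
    (W : Submodule ℝ E) : Prop :=
  (∀ v ∈ W, J v ∈ W) ∧ (∀ v ∈ W, (∀ w ∈ W, B v w = 0) → v = 0)

def jPairs (J : E →ₗ[ℝ] E) {ι : Type*} (e : ι → E) : Bool × ι → E :=
  fun p => if p.1 then J (e p.2) else e p.2

theorem span_jPairs_cons {m : ℕ} (x : E) (e : Fin m → E) :
    Submodule.span ℝ (Set.range (jPairs J (Fin.cons x e : Fin (m + 1) → E))) =
      Submodule.span ℝ {x, J x} ⊔ Submodule.span ℝ (Set.range (jPairs J e)) := by
  rw [← Submodule.span_union]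
  congr 1
  ext u
  simp only [jPairs, Set.mem_range, Prod.exists, Bool.exists_bool, Fin.exists_fin_succ,
    Fin.cons_zero, Fin.cons_succ, Set.mem_union, Set.mem_insert_iff, Set.mem_singleton_iff,
    Bool.false_eq_true, if_false, if_true]
  grind

theorem mem_orthogonal_span_pair {x y v : E} :
    v ∈ B.orthogonal (Submodule.span ℝ {x, y}) ↔ B x v = 0 ∧ B y v = 0 := by
  refine ⟨fun h => ⟨h x (Submodule.subset_span (by simp)),
    h y (Submodule.subset_span (by simp))⟩, fun ⟨hx, hy⟩ n hn => ?_⟩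
  obtain ⟨a, b, rfl⟩ := Submodule.mem_span_pair.mp hn
  simp [hx, hy]

theorem IsPseudoHermitian.map_mem_orthogonal_span_pair (hJ : IsPseudoHermitian B J) {x v : E}
    (hv : v ∈ B.orthogonal (Submodule.span ℝ {x, J x})) :
    J v ∈ B.orthogonal (Submodule.span ℝ {x, J x}) := by
  rw [mem_orthogonal_span_pair] at hv ⊢
  exact ⟨by rw [← neg_eq_zero, ← hJ.isSkewAdj]; exact hv.2, by rw [hJ.2]; exact hv.1⟩

theorem exists_mem_apply_self_ne_zero (hB : ∀ x y, B x y = B y x) {W : Submodule ℝ E}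
    (hW : ∀ v ∈ W, (∀ w ∈ W, B v w = 0) → v = 0) (hW₀ : W ≠ ⊥) : ∃ x ∈ W, B x x ≠ 0 := by
  by_contra! hiso
  refine hW₀ ((Submodule.eq_bot_iff W).mpr fun v hv => hW v hv fun w hw => ?_)
  have hvw := hiso (v + w) (W.add_mem hv hw)
  simp only [map_add, LinearMap.add_apply, hiso v hv, hiso w hw, hB w v] at hvw
  linarith

section ComplexLine

variable {x : E}

theorem eq_zero_of_smul_add_smul_mem_orthogonal (hB : ∀ x y, B x y = B y x)
    (hJ : IsPseudoHermitian B J) (hx : B x x ≠ 0) {a b : ℝ}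
    (h : a • x + b • J x ∈ B.orthogonal (Submodule.span ℝ {x, J x})) : a = 0 ∧ b = 0 := by
  obtain ⟨h₁, h₂⟩ := mem_orthogonal_span_pair.mp h
  have hxJx : B x (J x) = 0 := by rw [hB]; exact hJ.apply_J_self hB x
  simp only [map_add, map_smul, smul_eq_mul, hxJx, hJ.apply_J_self hB, hJ.2] at h₁ h₂
  exact ⟨by simpa [hx] using h₁, by simpa [hx] using h₂⟩

theorem finrank_span_pair_J (hB : ∀ x y, B x y = B y x) (hJ : IsPseudoHermitian B J)
    (hx : B x x ≠ 0) : finrank ℝ (Submodule.span ℝ {x, J x}) = 2 := by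
  have hli : LinearIndependent ℝ ![x, J x] :=
    LinearIndependent.pair_iff.mpr fun s t hst =>
      eq_zero_of_smul_add_smul_mem_orthogonal hB hJ hx (hst ▸ Submodule.zero_mem _)
  rw [← Matrix.range_cons_cons_empty, finrank_span_eq_card hli, Fintype.card_fin]

variable [FiniteDimensional ℝ E] {W : Submodule ℝ E}

theorem isCompl_span_pair_J_orthogonal (hB : ∀ x y, B x y = B y x)
    (hJ : IsPseudoHermitian B J) (hx : B x x ≠ 0) :
    IsCompl (Submodule.span ℝ {x, J x}) (B.orthogonal (Submodule.span ℝ {x, J x})) := by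
  refine (LinearMap.BilinForm.isCompl_orthogonal_iff_disjoint fun u v h => ?_).mpr
    (Submodule.disjoint_def.mpr fun v hv hv' => ?_)
  · rwa [hB]
  · obtain ⟨a, b, rfl⟩ := Submodule.mem_span_pair.mp hv
    obtain ⟨rfl, rfl⟩ := eq_zero_of_smul_add_smul_mem_orthogonal hB hJ hx hv'
    simp

theorem span_pair_J_sup_orthogonal_inf (hB : ∀ x y, B x y = B y x)
    (hJ : IsPseudoHermitian B J) (hx : B x x ≠ 0) (hxW : x ∈ W) (hJxW : J x ∈ W) :
    Submodule.span ℝ {x, J x} ⊔ (B.orthogonal (Submodule.span ℝ {x, J x}) ⊓ W) = W := by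
  have hle : Submodule.span ℝ {x, J x} ≤ W :=
    Submodule.span_le.mpr (by simp [Set.insert_subset_iff, hxW, hJxW])
  rw [← sup_inf_assoc_of_le _ hle, (isCompl_span_pair_J_orthogonal hB hJ hx).sup_eq_top,
    top_inf_eq]

namespace IsNondegComplexSubspace

variable (hB : ∀ x y, B x y = B y x) (hJ : IsPseudoHermitian B J)
include hB hJ

theorem orthogonal_inf (hW : IsNondegComplexSubspace B J W) (hx : B x x ≠ 0) (hxW : x ∈ W) :
    IsNondegComplexSubspace B J (B.orthogonal (Submodule.span ℝ {x, J x}) ⊓ W) := by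
  refine ⟨fun v hv => ⟨hJ.map_mem_orthogonal_span_pair hv.1, hW.1 v hv.2⟩,
    fun v hv hvW' => hW.2 v hv.2 fun w hw => ?_⟩
  rw [← span_pair_J_sup_orthogonal_inf hB hJ hx hxW (hW.1 x hxW)] at hw
  obtain ⟨u, hu, w', hw', rfl⟩ := Submodule.mem_sup.mp hw
  rw [map_add, hB v u, hv.1 u hu, hvW' w' hw', add_zero]

theorem finrank_orthogonal_inf (hW : IsNondegComplexSubspace B J W) (hx : B x x ≠ 0)
    (hxW : x ∈ W) :
    finrank ℝ W = finrank ℝ ↥(B.orthogonal (Submodule.span ℝ {x, J x}) ⊓ W) + 2 := by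
  have hdisj := (isCompl_span_pair_J_orthogonal hB hJ hx).disjoint.mono_right
    (inf_le_left (b := W))
  have := Submodule.finrank_sup_add_finrank_inf_eq (Submodule.span ℝ {x, J x})
    (B.orthogonal (Submodule.span ℝ {x, J x}) ⊓ W)
  rw [span_pair_J_sup_orthogonal_inf hB hJ hx hxW (hW.1 x hxW), hdisj.eq_bot, finrank_bot,
    finrank_span_pair_J hB hJ hx] at this
  omega

/-- Split off nonisotropic complex lines, which exist by polarization. -/
theorem exists_span_jPairs_eq (hW : IsNondegComplexSubspace B J W) :
    ∃ (m : ℕ) (e : Fin m → E),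
      Submodule.span ℝ (Set.range (jPairs J e)) = W ∧ finrank ℝ W = 2 * m := by
  induction hn : finrank ℝ W using Nat.strong_induction_on generalizing W with
  | _ n ih =>
  rcases eq_or_ne W ⊥ with rfl | hW₀
  · exact ⟨0, Fin.elim0, by simp, by rw [← hn, finrank_bot]⟩
  obtain ⟨x, hxW, hx⟩ := exists_mem_apply_self_ne_zero hB hW.2 hW₀
  have hdim := hW.finrank_orthogonal_inf hB hJ hx hxW
  obtain ⟨m, e, hspan, hm⟩ := ih _ (by omega) (hW.orthogonal_inf hB hJ hx hxW) rfl
  refine ⟨m + 1, Fin.cons x e, ?_, by omega⟩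
  rw [span_jPairs_cons, hspan, span_pair_J_sup_orthogonal_inf hB hJ hx hxW (hW.1 x hxW)]

end IsNondegComplexSubspace

theorem exists_basis_jPairs_cons (hB : ∀ x y, B x y = B y x)
    (hnd : ∀ v : E, (∀ w : E, B v w = 0) → v = 0) (hJ : IsPseudoHermitian B J)
    (hx : B x x ≠ 0) :
    ∃ (m : ℕ) (e : Fin m → E) (b : Basis (Bool × Fin (m + 1)) ℝ E),
      ⇑b = jPairs J (Fin.cons x e) ∧ (∀ i, B x (e i) = 0 ∧ B (J x) (e i) = 0) ∧
      finrank ℝ E = 2 * (m + 1) := by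
  have hE : IsNondegComplexSubspace B J ⊤ :=
    ⟨fun _ _ => trivial, fun v _ hv => hnd v fun w => hv w trivial⟩
  obtain ⟨m, e, hspan, hm⟩ :=
    (hE.orthogonal_inf hB hJ hx Submodule.mem_top).exists_span_jPairs_eq hB hJ
  have htop : Submodule.span ℝ (Set.range (jPairs J (Fin.cons x e))) = ⊤ := by
    rw [span_jPairs_cons, hspan,
      span_pair_J_sup_orthogonal_inf hB hJ hx Submodule.mem_top Submodule.mem_top]
  have hdim : finrank ℝ E = 2 * (m + 1) := by
    have := hE.finrank_orthogonal_inf hB hJ hx Submodule.mem_top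
    rw [finrank_top] at this
    omega
  refine ⟨m, e, basisOfTopLeSpanOfCardEqFinrank _ htop.ge (by simp [hdim]),
    coe_basisOfTopLeSpanOfCardEqFinrank _ _ _, fun i => ?_, hdim⟩
  have hei : e i ∈ Submodule.span ℝ (Set.range (jPairs J e)) :=
    Submodule.subset_span ⟨(false, i), rfl⟩
  rw [hspan] at hei
  exact mem_orthogonal_span_pair.mp hei.1

end ComplexLine

def HasRotationBlocks {ι : Type*} (f : E →ₗ[ℝ] E) (b : Basis (Bool × ι) ℝ E) (μ : ι → ℝ) :
    Prop :=
  ∀ i, f (b (false, i)) = -μ i • b (true, i) ∧ f (b (true, i)) = μ i • b (false, i)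

/-- The conjugating map sends `b' (false, i) ↦ b (false, i)` and
`b' (true, i) ↦ s • b (true, i)`. -/
theorem HasRotationBlocks.exists_conj {ι : Type*} {f g : E →ₗ[ℝ] E}
    {b b' : Basis (Bool × ι) ℝ E} {μ ν : ι → ℝ} {s : ℝ} (hf : HasRotationBlocks f b μ)
    (hg : HasRotationBlocks g b' ν) (hs : s * s = 1) (hν : ∀ i, ν i = s * μ i) :
    ∃ ψ : E ≃ₗ[ℝ] E, ∀ v, f v = ψ (g (ψ.symm v)) := by
  have hw : ∀ p : Bool × ι, IsUnit (if p.1 then s else 1) := fun p => by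
    split_ifs
    exacts [IsUnit.of_mul_eq_one s hs, isUnit_one]
  set ψ := b'.equiv (b.isUnitSMul hw) (Equiv.refl _)
  have hψ (p : Bool × ι) : ψ (b' p) = (if p.1 then s else 1) • b p := by
    simp [ψ, Basis.equiv_apply, Basis.isUnitSMul_apply]
  have hcomm : f ∘ₗ ψ.toLinearMap = ψ.toLinearMap ∘ₗ g := by
    refine b'.ext fun ⟨β, i⟩ => ?_
    cases β
    · simp only [LinearMap.comp_apply, LinearEquiv.coe_coe, hψ, (hf i).1, (hg i).1, map_smul,
        hν, Bool.false_eq_true, if_false, if_true]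
      match_scalars
      linear_combination μ i * hs
    · simp only [LinearMap.comp_apply, LinearEquiv.coe_coe, hψ, (hf i).2, (hg i).2, map_smul,
        hν, Bool.false_eq_true, if_false, if_true]
      module
  refine ⟨ψ, fun v => ?_⟩
  simpa using congr($hcomm (ψ.symm v))

def idJBlockWeights (c₀ c₁ : ℝ) (m : ℕ) : Fin (m + 1) → ℝ :=
  Fin.cons (c₀ + 3 * c₁) fun _ => 2 * c₁

theorem IsCurvatureOperator.hasRotationBlocks_idJTensor (hB : ∀ x y, B x y = B y x)
    (hnd : ∀ v : E, (∀ w : E, B v w = 0) → v = 0) (hJ : IsPseudoHermitian B J) {c₀ c₁ : ℝ}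
    {x : E} {A : E →ₗ[ℝ] E} (hA : IsCurvatureOperator B (idJTensor B J c₀ c₁) x (J x) A)
    {m : ℕ} {e : Fin m → E} {b : Basis (Bool × Fin (m + 1)) ℝ E}
    (hb : ⇑b = jPairs J (Fin.cons x e)) (he : ∀ i, B x (e i) = 0 ∧ B (J x) (e i) = 0) :
    HasRotationBlocks A b fun i => B x x * idJBlockWeights c₀ c₁ m i := by
  set e' : Fin (m + 1) → E := Fin.cons x e
  have hfalse (i : Fin (m + 1)) :
      A (e' i) = -(B x x * idJBlockWeights c₀ c₁ m i) • J (e' i) := by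
    refine Fin.cases ?_ (fun i => ?_) i
    · exact hA.idJTensor_apply_self hB hnd hJ
    · exact hA.idJTensor_apply_of_orthogonal hnd hJ (he i).1 (he i).2
  intro i
  simp only [hb, jPairs, Bool.false_eq_true, if_false, if_true]
  refine ⟨hfalse i, ?_⟩
  rw [← hA.idJTensor_comm hnd hJ, hfalse i, map_smul, hJ.1]
  module

theorem isComplexJordanIP_idJTensor [FiniteDimensional ℝ E] (hB : ∀ x y, B x y = B y x)
    (hnd : ∀ v : E, (∀ w : E, B v w = 0) → v = 0) (hJ : IsPseudoHermitian B J) (c₀ c₁ : ℝ) :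
    IsComplexJordanIP B J (idJTensor B J c₀ c₁) := by
  intro x y hx hy Ax Ay hAx hAy
  have hxx : B x x * B x x = 1 := by rw [← sq, ← sq_abs, hx, one_pow]
  have hyy : B y y * B y y = 1 := by rw [← sq, ← sq_abs, hy, one_pow]
  obtain ⟨m, ex, bx, hbx, hex, hdimx⟩ :=
    exists_basis_jPairs_cons hB hnd hJ (left_ne_zero_of_mul_eq_one hxx)
  obtain ⟨n, ey, b_y, hby, hey, hdimy⟩ :=
    exists_basis_jPairs_cons hB hnd hJ (left_ne_zero_of_mul_eq_one hyy)
  obtain rfl : m = n := by omega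
  refine (IsCurvatureOperator.hasRotationBlocks_idJTensor hB hnd hJ hAx hbx hex).exists_conj
    (IsCurvatureOperator.hasRotationBlocks_idJTensor hB hnd hJ hAy hby hey) (s := B x x * B y y)
    (by linear_combination hyy + B y y ^ 2 * hxx) fun i => ?_
  linear_combination -(B y y * idJBlockWeights c₀ c₁ m i) * hxx

end

/-- `R := c₀ R_Id + c₁ R_J` is an almost complex Jordan IP algebraic
curvature tensor. -/
theorem id_J_jordanIP
    (B : LinearMap.BilinForm ℝ V)
    (hsymm : ∀ x y : V, B x y = B y x)
    (hnd : ∀ v : V, (∀ w : V, B v w = 0) → v = 0)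
    (J : V →ₗ[ℝ] V) (hJ : IsPseudoHermitian B J)
    (c₀ c₁ : ℝ) :
    IsAlgCurvTensor
        (fun x y z w => c₀ * Rs B LinearMap.id x y z w + c₁ * Ra B J x y z w) ∧
      IsAlmostComplex B J
        (fun x y z w => c₀ * Rs B LinearMap.id x y z w + c₁ * Ra B J x y z w) ∧
      IsComplexJordanIP B J
        (fun x y z w => c₀ * Rs B LinearMap.id x y z w + c₁ * Ra B J x y z w) :=
  ⟨isAlgCurvTensor_idJTensor hsymm hJ c₀ c₁, isAlmostComplex_idJTensor hnd hJ c₀ c₁,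
    isComplexJordanIP_idJTensor hsymm hnd hJ c₀ c₁⟩
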